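/- arXiv:1804.00961 — 2 statements merged into one kernel-verified Lean document; each statement's English description precedes it below -/
import Mathlib

section
/- Let η ∈ (0,1) and for integers b ≥ 2 set μ_η(b) = Σ_{2 ≤ k ≤ ηb} (k−1) C(b,k) λ_{b,k}. Then for every integer b ≥ 2 one has μ(b) − μ_η(b) ≤ (b−1) Λ([0,1]) / η, where μ(b) = Σ_{k=2}^{b} (k−1) C(b,k) λ_{b,k}. Moreover, if ∫_{[0,1]} p^{−1} Λ(dp) = ∞ (no dust component), then μ_η(b)/μ(b) → 1 as b → ∞. -/
open MeasureTheory Real Set Filter Topology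

/-- The merging rate `λ_{b,k} = ∫_{[0,1]} p^{k−2} (1−p)^{b−k} Λ(dp)`. -/
noncomputable def lamBK (Λ : Measure ℝ) (b k : ℕ) : ℝ :=
  ∫ p in Set.Icc (0:ℝ) 1, p ^ ((k : ℝ) - 2) * (1 - p) ^ ((b : ℝ) - (k : ℝ)) ∂Λ

/-- `μ(b) = Σ_{k=2}^{b} (k−1) C(b,k) λ_{b,k}`, the total rate of decrease. -/
noncomputable def muD (Λ : Measure ℝ) (b : ℕ) : ℝ :=
  ∑ k ∈ Finset.Icc 2 b, ((k : ℝ) - 1) * (b.choose k : ℝ) * lamBK Λ b k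

/-- `μ_η(b) = Σ_{2 ≤ k ≤ ηb} (k−1) C(b,k) λ_{b,k}`, the truncated rate of decrease. -/
noncomputable def muEta (Λ : Measure ℝ) (η : ℝ) (b : ℕ) : ℝ :=
  ∑ k ∈ (Finset.Icc 2 b).filter (fun k : ℕ => (k : ℝ) ≤ η * (b : ℝ)),
    ((k : ℝ) - 1) * (b.choose k : ℝ) * lamBK Λ b k

/-!
Write `μ(b) = ∫ g_b dΛ` with `g_b(p) = ∑_{k=2}^b (k-1) C(b,k) p^(k-2) (1-p)^(b-k)` (this is
`muDensity b`). For `k > ηb` one has `k - 1 ≤ k(k-1)/(ηb)`, and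
`∑_k k(k-1) C(b,k) p^(k-2) (1-p)^(b-k) = b(b-1)` (second factorial moment of the binomial law),
so the part of `g_b` with `k > ηb` is at most `(b-1)/η`; integrating gives the first bound.

For the second, `p² g_b(p) = bp - 1 + (1-p)^b` (mean of the binomial law), so `g_b(p)/b → 1/p`
for `p > 0`, while `g_b(0)/b = (b-1)/2 → ∞`. By Fatou, `μ(b)/b → ∞` when `∫ p⁻¹ dΛ = ∞`, so
the difference `μ(b) - μ_η(b) = O(b)` is `o(μ(b))`.
-/

theorem Nat.add_two_mul_add_one_mul_choose (n j : ℕ) :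
    (j + 2) * (j + 1) * (n + 2).choose (j + 2) = (n + 2) * (n + 1) * n.choose j := by
  have h₁ := Nat.add_one_mul_choose_eq n j
  have h₂ := Nat.add_one_mul_choose_eq (n + 1) (j + 1)
  calc (j + 2) * (j + 1) * (n + 2).choose (j + 2)
      = (n + 1 + 1) * (n + 1).choose (j + 1) * (j + 1) := by rw [h₂]; ring
    _ = (n + 2) * (n + 1) * n.choose j := by rw [mul_assoc, ← h₁]; ring

theorem sum_Icc_mul_sub_one_mul_choose_mul_pow {R : Type*} [CommRing R] (n : ℕ) (x y : R) :
    ∑ k ∈ Finset.Icc 2 (n + 2),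
        (k : R) * (k - 1) * (n + 2).choose k * (x ^ (k - 2) * y ^ (n + 2 - k))
      = (n + 2) * (n + 1) * (x + y) ^ n := by
  rw [← Finset.Ico_add_one_right_eq_Icc, Finset.sum_Ico_eq_sum_range, add_pow, Finset.mul_sum,
    show n + 2 + 1 - 2 = n + 1 by omega]
  refine Finset.sum_congr rfl fun j hj => ?_
  have hj : j ≤ n := Nat.lt_succ_iff.mp (Finset.mem_range.mp hj)
  have key : ((j + 2) * (j + 1) * (n + 2).choose (j + 2) : ℕ)
      = (((n + 2) * (n + 1) * n.choose j : ℕ) : R) := by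
    rw [Nat.add_two_mul_add_one_mul_choose]
  push_cast at key
  rw [show 2 + j - 2 = j by omega, show n + 2 - (2 + j) = n - j by omega, add_comm 2 j]
  push_cast
  linear_combination (x ^ j * y ^ (n - j)) * key

theorem sum_range_sub_one_mul_choose_mul_pow (b : ℕ) (p : ℝ) :
    ∑ k ∈ Finset.range (b + 1), ((k : ℝ) - 1) * b.choose k * (p ^ k * (1 - p) ^ (b - k))
      = b * p - 1 := by
  have hmass := congrArg (Polynomial.eval p) (bernsteinPolynomial.sum ℝ b)
  have hmean := congrArg (Polynomial.eval p) (bernsteinPolynomial.sum_smul ℝ b)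
  simp only [Polynomial.eval_finsetSum, bernsteinPolynomial, Polynomial.eval_mul,
    Polynomial.eval_pow, Polynomial.eval_sub, Polynomial.eval_one, Polynomial.eval_X,
    Polynomial.eval_natCast, nsmul_eq_mul] at hmass hmean
  calc _ = ∑ k ∈ Finset.range (b + 1), (k * (b.choose k * p ^ k * (1 - p) ^ (b - k))
          - b.choose k * p ^ k * (1 - p) ^ (b - k)) := Finset.sum_congr rfl fun k _ => by ring
    _ = b * p - 1 := by rw [Finset.sum_sub_distrib, hmean, hmass]

noncomputable def muDensity (b : ℕ) (p : ℝ) : ℝ :=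
  ∑ k ∈ Finset.Icc 2 b, ((k : ℝ) - 1) * b.choose k * (p ^ (k - 2) * (1 - p) ^ (b - k))

theorem sq_mul_muDensity {b : ℕ} (hb : 2 ≤ b) (p : ℝ) :
    p ^ 2 * muDensity b p = b * p - 1 + (1 - p) ^ b := by
  have hsplit := Finset.sum_range_add_sum_Ico
    (fun k => ((k : ℝ) - 1) * b.choose k * (p ^ k * (1 - p) ^ (b - k))) (by omega : 2 ≤ b + 1)
  rw [sum_range_sub_one_mul_choose_mul_pow, Finset.Ico_add_one_right_eq_Icc] at hsplit
  rw [muDensity, Finset.mul_sum]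
  have hterm : ∀ k ∈ Finset.Icc 2 b,
      p ^ 2 * (((k : ℝ) - 1) * b.choose k * (p ^ (k - 2) * (1 - p) ^ (b - k)))
        = ((k : ℝ) - 1) * b.choose k * (p ^ k * (1 - p) ^ (b - k)) := fun k hk => by
    rw [← pow_sub_mul_pow p (Finset.mem_Icc.mp hk).1]; ring
  rw [Finset.sum_congr rfl hterm]
  norm_num [Finset.sum_range_succ] at hsplit
  linarith

theorem muDensity_zero {b : ℕ} (hb : 2 ≤ b) : muDensity b 0 = b * (b - 1) / 2 := by
  rw [muDensity, Finset.sum_eq_single_of_mem 2 (Finset.mem_Icc.mpr ⟨le_rfl, hb⟩)]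
  · norm_num [Nat.cast_choose_two]
  · intro k hk hk2
    simp [zero_pow (show k - 2 ≠ 0 by have := (Finset.mem_Icc.mp hk).1; omega)]

theorem tendsto_muDensity_div_of_pos {p : ℝ} (hp₀ : 0 < p) (hp₁ : p ≤ 1) :
    Tendsto (fun b : ℕ => muDensity b p / b) atTop (𝓝 p⁻¹) := by
  have hq : Tendsto (fun b : ℕ => ((1 - p) ^ b - 1) * (b : ℝ)⁻¹) atTop (𝓝 0) := by
    have hpow := tendsto_pow_atTop_nhds_zero_of_lt_one (r := 1 - p) (by linarith) (by linarith)
    simpa using (hpow.sub_const 1).mul tendsto_inv_atTop_nhds_zero_nat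
  have hlim := (hq.const_add p).div_const (p ^ 2)
  rw [add_zero, show p / p ^ 2 = p⁻¹ by field_simp] at hlim
  refine hlim.congr' ?_
  filter_upwards [eventually_ge_atTop 2] with b hb
  have hb₀ : (b : ℝ) ≠ 0 := by positivity
  calc (p + ((1 - p) ^ b - 1) * (b : ℝ)⁻¹) / p ^ 2
      = (b * p - 1 + (1 - p) ^ b) / (p ^ 2 * b) := by field_simp; ring
    _ = muDensity b p / b := by rw [← sq_mul_muDensity hb]; field_simp

theorem tendsto_muDensity_zero_div : Tendsto (fun b : ℕ => muDensity b 0 / b) atTop atTop := by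
  have hlim : Tendsto (fun b : ℕ => ((b : ℝ) - 1) / 2) atTop atTop :=
    (tendsto_atTop_add_const_right _ (-1) tendsto_natCast_atTop_atTop).atTop_div_const two_pos
  refine hlim.congr' ?_
  filter_upwards [eventually_ge_atTop 2] with b hb
  rw [muDensity_zero hb]
  field_simp

theorem tendsto_ofReal_muDensity_div {p : ℝ} (hp : p ∈ Icc (0 : ℝ) 1) :
    Tendsto (fun b : ℕ => ENNReal.ofReal (muDensity b p / b)) atTop (𝓝 (ENNReal.ofReal p)⁻¹) := by
  rcases hp.1.eq_or_lt with rfl | hp₀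
  · simpa using tendsto_muDensity_zero_div
  · rw [← ENNReal.ofReal_inv_of_pos hp₀]
    exact ENNReal.tendsto_ofReal (tendsto_muDensity_div_of_pos hp₀ hp.2)

theorem lamBK_eq_integral (Λ : Measure ℝ) {b k : ℕ} (hk₂ : 2 ≤ k) (hkb : k ≤ b) :
    lamBK Λ b k = ∫ p in Icc (0 : ℝ) 1, p ^ (k - 2) * (1 - p) ^ (b - k) ∂Λ := by
  rw [lamBK]
  congr 1 with p
  rw [← Nat.cast_ofNat, ← Nat.cast_sub hk₂, ← Nat.cast_sub hkb, rpow_natCast, rpow_natCast]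

theorem sum_mul_lamBK_eq_integral (Λ : Measure ℝ) [IsFiniteMeasure Λ] {b : ℕ} {s : Finset ℕ}
    (hs : s ⊆ Finset.Icc 2 b) (c : ℕ → ℝ) :
    ∑ k ∈ s, c k * lamBK Λ b k
      = ∫ p in Icc (0 : ℝ) 1, ∑ k ∈ s, c k * (p ^ (k - 2) * (1 - p) ^ (b - k)) ∂Λ := by
  have hcont (k : ℕ) : Continuous fun p : ℝ => p ^ (k - 2) * (1 - p) ^ (b - k) := by fun_prop
  rw [integral_finsetSum _ fun k _ => (hcont k).integrableOn_Icc.const_mul _]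
  refine Finset.sum_congr rfl fun k hk => ?_
  obtain ⟨hk₂, hkb⟩ := Finset.mem_Icc.mp (hs hk)
  rw [lamBK_eq_integral Λ hk₂ hkb, integral_const_mul]

theorem muD_eq_integral (Λ : Measure ℝ) [IsFiniteMeasure Λ] (b : ℕ) :
    muD Λ b = ∫ p in Icc (0 : ℝ) 1, muDensity b p ∂Λ :=
  sum_mul_lamBK_eq_integral Λ subset_rfl fun k => ((k : ℝ) - 1) * b.choose k

theorem sum_filter_sub_one_mul_choose_mul_pow_le {b : ℕ} (hb : 2 ≤ b) {η : ℝ} (hη : 0 < η)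
    {p : ℝ} (hp : p ∈ Icc (0 : ℝ) 1) :
    ∑ k ∈ (Finset.Icc 2 b).filter (fun k : ℕ => ¬ (k : ℝ) ≤ η * b),
      ((k : ℝ) - 1) * b.choose k * (p ^ (k - 2) * (1 - p) ^ (b - k)) ≤ (b - 1) / η := by
  obtain ⟨n, rfl⟩ := Nat.exists_eq_add_of_le' hb
  have hηb : 0 < η * (n + 2 : ℕ) := by positivity
  set w : ℕ → ℝ := fun k => (n + 2).choose k * (p ^ (k - 2) * (1 - p) ^ (n + 2 - k))
  have hw : ∀ k, 0 ≤ w k := fun k => by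
    have := hp.1; have := hp.2
    exact mul_nonneg (Nat.cast_nonneg _) (mul_nonneg (by positivity) (pow_nonneg (by linarith) _))
  calc ∑ k ∈ (Finset.Icc 2 (n + 2)).filter (fun k : ℕ => ¬ (k : ℝ) ≤ η * (n + 2 : ℕ)),
        ((k : ℝ) - 1) * (n + 2).choose k * (p ^ (k - 2) * (1 - p) ^ (n + 2 - k))
      ≤ ∑ k ∈ (Finset.Icc 2 (n + 2)).filter (fun k : ℕ => ¬ (k : ℝ) ≤ η * (n + 2 : ℕ)),
          (η * (n + 2 : ℕ))⁻¹ * ((k : ℝ) * (k - 1) * w k) := by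
        refine Finset.sum_le_sum fun k hk => ?_
        obtain ⟨hk, hkη⟩ := Finset.mem_filter.mp hk
        have hk₁ : (1 : ℝ) ≤ k := by exact_mod_cast (Finset.mem_Icc.mp hk).1.trans' one_le_two
        have hfactor : (k : ℝ) - 1 ≤ (η * (n + 2 : ℕ))⁻¹ * (k * (k - 1)) := by
          rw [inv_mul_eq_div, le_div_iff₀ hηb]
          nlinarith
        calc ((k : ℝ) - 1) * (n + 2).choose k * (p ^ (k - 2) * (1 - p) ^ (n + 2 - k))
            = ((k : ℝ) - 1) * w k := by simp only [w, mul_assoc]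
          _ ≤ (η * (n + 2 : ℕ))⁻¹ * (k * (k - 1)) * w k :=
              mul_le_mul_of_nonneg_right hfactor (hw k)
          _ = _ := by ring
    _ ≤ ∑ k ∈ Finset.Icc 2 (n + 2), (η * (n + 2 : ℕ))⁻¹ * ((k : ℝ) * (k - 1) * w k) := by
        refine Finset.sum_le_sum_of_subset_of_nonneg (Finset.filter_subset _ _) fun k hk _ => ?_
        have hk₁ : (1 : ℝ) ≤ k := by exact_mod_cast (Finset.mem_Icc.mp hk).1.trans' one_le_two
        have := hw k
        positivity
    _ = (η * (n + 2 : ℕ))⁻¹ * ((n + 2) * (n + 1) * (p + (1 - p)) ^ n) := by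
        rw [← Finset.mul_sum, ← sum_Icc_mul_sub_one_mul_choose_mul_pow]
        simp only [w, mul_assoc]
    _ = ((n + 2 : ℕ) - 1) / η := by
        push_cast
        field_simp
        ring

theorem muD_sub_muEta_le (Λ : Measure ℝ) [IsFiniteMeasure Λ] {η : ℝ} (hη : 0 < η) {b : ℕ}
    (hb : 2 ≤ b) : muD Λ b - muEta Λ η b ≤ (b - 1) * (Λ (Icc (0 : ℝ) 1)).toReal / η := by
  rw [muD, muEta, ← Finset.sum_filter_add_sum_filter_not (Finset.Icc 2 b)
    (fun k : ℕ => (k : ℝ) ≤ η * b), add_sub_cancel_left,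
    sum_mul_lamBK_eq_integral Λ (Finset.filter_subset _ _) fun k => ((k : ℝ) - 1) * b.choose k]
  calc _ ≤ ∫ _ in Icc (0 : ℝ) 1, ((b : ℝ) - 1) / η ∂Λ :=
        setIntegral_mono_on (Continuous.integrableOn_Icc (by fun_prop))
          (integrableOn_const (measure_ne_top _ _) enorm_ne_top) measurableSet_Icc
          fun p hp => sum_filter_sub_one_mul_choose_mul_pow_le hb hη hp
    _ = (b - 1) * (Λ (Icc (0 : ℝ) 1)).toReal / η := by
        rw [setIntegral_const, smul_eq_mul, measureReal_def]; ring

theorem lamBK_nonneg (Λ : Measure ℝ) (b k : ℕ) : 0 ≤ lamBK Λ b k :=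
  setIntegral_nonneg measurableSet_Icc fun _ hp =>
    mul_nonneg (rpow_nonneg hp.1 _) (rpow_nonneg (sub_nonneg.2 hp.2) _)

theorem muEta_le_muD (Λ : Measure ℝ) (η : ℝ) (b : ℕ) : muEta Λ η b ≤ muD Λ b := by
  refine Finset.sum_le_sum_of_subset_of_nonneg (Finset.filter_subset _ _) fun k hk _ => ?_
  have hk₁ : (1 : ℝ) ≤ k := by exact_mod_cast (Finset.mem_Icc.mp hk).1.trans' one_le_two
  have := lamBK_nonneg Λ b k
  have : (0 : ℝ) ≤ k - 1 := by linarith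
  positivity

theorem muDensity_nonneg (b : ℕ) {p : ℝ} (hp : p ∈ Icc (0 : ℝ) 1) : 0 ≤ muDensity b p := by
  refine Finset.sum_nonneg fun k hk => ?_
  have hk₁ : (1 : ℝ) ≤ k := by exact_mod_cast (Finset.mem_Icc.mp hk).1.trans' one_le_two
  have : (0 : ℝ) ≤ k - 1 := by linarith
  have := hp.1
  have : 0 ≤ 1 - p := sub_nonneg.2 hp.2
  positivity

theorem continuous_muDensity (b : ℕ) : Continuous (muDensity b) := by
  unfold muDensity
  fun_prop

theorem tendsto_integral_atTop_of_lintegral_liminf_eq_top {α : Type*} [MeasurableSpace α]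
    {μ : Measure α} {f : ℕ → α → ℝ} (hf : ∀ n, Integrable (f n) μ) (hf₀ : ∀ n, 0 ≤ᵐ[μ] f n)
    (h : ∫⁻ x, liminf (fun n => ENNReal.ofReal (f n x)) atTop ∂μ = ⊤) :
    Tendsto (fun n => ∫ x, f n x ∂μ) atTop atTop := by
  rw [← ENNReal.tendsto_ofReal_nhds_top]
  simp_rw [ofReal_integral_eq_lintegral_ofReal (hf _) (hf₀ _)]
  refine tendsto_of_le_liminf_of_limsup_le ?_ le_top
  exact h ▸ lintegral_liminf_le' fun n => (hf n).aemeasurable.ennreal_ofReal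

theorem tendsto_muD_div_atTop (Λ : Measure ℝ) [IsFiniteMeasure Λ]
    (hdust : ∫⁻ p in Icc (0 : ℝ) 1, (ENNReal.ofReal p)⁻¹ ∂Λ = ⊤) :
    Tendsto (fun b : ℕ => muD Λ b / b) atTop atTop := by
  simp_rw [muD_eq_integral, ← integral_div]
  refine tendsto_integral_atTop_of_lintegral_liminf_eq_top
    (fun b => (continuous_muDensity b).integrableOn_Icc.div_const _)
    (fun b => (ae_restrict_iff' measurableSet_Icc).2 (.of_forall fun p hp =>
      div_nonneg (muDensity_nonneg b hp) b.cast_nonneg)) ?_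
  rw [← hdust]
  exact setLIntegral_congr_fun measurableSet_Icc fun _ hp =>
    (tendsto_ofReal_muDensity_div hp).liminf_eq

theorem tendsto_div_nhds_one_of_sub_isBigO {f g : ℕ → ℝ}
    (hf : Tendsto (fun n => f n / n) atTop atTop) (hfg : (f - g) =O[atTop] fun n => (n : ℝ)) :
    Tendsto (g / f) atTop (𝓝 1) := by
  have hf₀ : ∀ᶠ n in atTop, f n ≠ 0 := by
    filter_upwards [hf.eventually_gt_atTop 0] with n hn hfn
    simp [hfn] at hn
  have hn : (fun n : ℕ => (n : ℝ)) =o[atTop] f := by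
    refine (Asymptotics.isLittleO_iff_tendsto' (hf₀.mono fun n hn h => absurd h hn)).2 ?_
    exact hf.inv_tendsto_atTop.congr fun n => by rw [Pi.inv_apply, inv_div]
  refine (Asymptotics.isEquivalent_iff_tendsto_one hf₀).1 ?_
  exact (hfg.trans_isLittleO hn).neg_left.congr_left fun n => neg_sub (f n) (g n)

theorem muEta_close_to_mu_general (Λ : Measure ℝ) [IsFiniteMeasure Λ] (η : ℝ) (hη0 : 0 < η) :
    (∀ b : ℕ, 2 ≤ b →
      muD Λ b - muEta Λ η b ≤ ((b : ℝ) - 1) * (Λ (Set.Icc (0:ℝ) 1)).toReal / η) ∧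
    ((∫⁻ p in Set.Icc (0:ℝ) 1, (ENNReal.ofReal p)⁻¹ ∂Λ = ⊤) →
      Tendsto (fun b : ℕ => muEta Λ η b / muD Λ b) atTop (𝓝 1)) := by
  refine ⟨fun b hb => muD_sub_muEta_le Λ hη0 hb, fun hdust => ?_⟩
  set K := (Λ (Icc (0 : ℝ) 1)).toReal
  refine tendsto_div_nhds_one_of_sub_isBigO (tendsto_muD_div_atTop Λ hdust)
    (Asymptotics.IsBigO.of_bound (K / η) ?_)
  filter_upwards [eventually_ge_atTop 2] with b hb
  rw [Pi.sub_apply, Real.norm_of_nonneg (sub_nonneg.2 (muEta_le_muD Λ η b)), Real.norm_natCast]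
  calc muD Λ b - muEta Λ η b ≤ (b - 1) * K / η := muD_sub_muEta_le Λ hη0 hb
    _ = K / η * (b - 1) := by ring
    _ ≤ K / η * b := mul_le_mul_of_nonneg_left (by linarith) (by positivity)

/-- For `η ∈ (0,1)` and every integer `b ≥ 2`, `μ(b) − μ_η(b) ≤ (b−1) Λ([0,1]) / η`;
moreover, in the dustless case `μ_η(b)/μ(b) → 1` as `b → ∞`. -/
theorem muEta_close_to_mu (Λ : Measure ℝ) [IsFiniteMeasure Λ] (hΛ : Λ ≠ 0)
    (hsupp : Λ (Set.Icc (0:ℝ) 1)ᶜ = 0) (η : ℝ) (hη0 : 0 < η) (hη1 : η < 1) :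
    (∀ b : ℕ, 2 ≤ b →
      muD Λ b - muEta Λ η b ≤ ((b : ℝ) - 1) * (Λ (Set.Icc (0:ℝ) 1)).toReal / η) ∧
    ((∫⁻ p in Set.Icc (0:ℝ) 1, (ENNReal.ofReal p)⁻¹ ∂Λ = ⊤) →
      Tendsto (fun b : ℕ => muEta Λ η b / muD Λ b) atTop (𝓝 1)) :=
  muEta_close_to_mu_general Λ η hη0
end

section
/- For every η > 0 and every integer b with b ≥ 2/η one has Σ_{k : ηb < k ≤ b} C(b,k) λ_{b,k} ≤ 2 Λ([0,1]) / η², where the sum runs over integers k with 2 ≤ k ≤ b and k > ηb, and C(b,k) denotes the binomial coefficient. -/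
open MeasureTheory Real Set Filter Topology

lemma lamBK_eq_setIntegral_pow (Λ : Measure ℝ) {b k : ℕ} (hk : 2 ≤ k) (hkb : k ≤ b) :
    lamBK Λ b k = ∫ p in Icc (0:ℝ) 1, p ^ (k - 2) * (1 - p) ^ (b - k) ∂Λ := by
  unfold lamBK
  congr 1 with p
  rw [← Nat.cast_ofNat, ← Nat.cast_sub hk, ← Nat.cast_sub hkb, rpow_natCast, rpow_natCast]

lemma choose_le_div_sq_mul_choose_sub_two {η : ℝ} (hη : 0 < η) {b k : ℕ} (hb : 2 ≤ η * b)
    (hk : η * b < k) :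
    (b.choose k : ℝ) ≤ 2 / η ^ 2 * (b - 2).choose (k - 2) := by
  have hchoose : (b.choose k : ℝ) * (k * (k - 1)) = b * (b - 1) * (b - 2).choose (k - 2) := by
    have h := congrArg (fun n : ℕ => (n : ℝ)) (Nat.choose_mul (n := b) (k := k) (s := 2)
      (by exact_mod_cast (hb.trans hk.le)))
    simp only [Nat.cast_mul, Nat.cast_choose_two] at h
    linarith
  -- `(ηb)² ≤ 2ηb(ηb - 1) ≤ 2k(k - 1)` because `ηb ≥ 2`
  have hsq : η ^ 2 * (b * (b - 1)) ≤ 2 * (k * (k - 1)) := by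
    have hb0 : (0:ℝ) ≤ b := b.cast_nonneg
    nlinarith [mul_nonneg hη.le hb0, mul_nonneg (sub_nonneg.2 hb) (mul_nonneg hη.le hb0),
      mul_nonneg (sub_nonneg.2 hk.le) (by linarith : (0:ℝ) ≤ k + η * b - 1)]
  have hk0 : (0:ℝ) < k * (k - 1) := by nlinarith
  rw [div_mul_eq_mul_div, le_div_iff₀ (by positivity)]
  refine le_of_mul_le_mul_right ?_ hk0
  linear_combination (η ^ 2) * hchoose + ((b - 2).choose (k - 2) : ℝ) * hsq

lemma sum_choose_sub_mul_pow_le_one {n s : ℕ} {S : Finset ℕ} (hS : S ⊆ Finset.Icc s n)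
    {p : ℝ} (hp : p ∈ Icc (0:ℝ) 1) :
    ∑ k ∈ S, ((n - s).choose (k - s) : ℝ) * (p ^ (k - s) * (1 - p) ^ (n - k)) ≤ 1 := by
  have hq : 0 ≤ 1 - p := sub_nonneg.2 hp.2
  have hp0 := hp.1
  calc ∑ k ∈ S, ((n - s).choose (k - s) : ℝ) * (p ^ (k - s) * (1 - p) ^ (n - k))
      ≤ ∑ k ∈ Finset.Icc s n, ((n - s).choose (k - s) : ℝ) * (p ^ (k - s) * (1 - p) ^ (n - k)) :=
        Finset.sum_le_sum_of_subset_of_nonneg hS fun _ _ _ => by positivity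
    _ ≤ (p + (1 - p)) ^ (n - s) := by
        rcases lt_or_ge n s with hns | hsn
        · simp [Finset.Icc_eq_empty_of_lt hns]
        rw [add_pow, ← Finset.Ico_add_one_right_eq_Icc, Finset.sum_Ico_eq_sum_range,
          Nat.sub_add_comm hsn]
        refine le_of_eq (Finset.sum_congr rfl fun m _ => ?_)
        rw [Nat.add_sub_cancel_left, Nat.sub_add_eq]
        ring
    _ = 1 := by simp

lemma sum_choose_sub_mul_setIntegral_le (μ : Measure ℝ) [IsFiniteMeasure μ] {n s : ℕ}
    {S : Finset ℕ} (hS : S ⊆ Finset.Icc s n) :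
    ∑ k ∈ S, ((n - s).choose (k - s) : ℝ) * ∫ p in Icc (0:ℝ) 1, p ^ (k - s) * (1 - p) ^ (n - k) ∂μ
      ≤ μ.real (Icc 0 1) := by
  have hint : ∀ k, IntegrableOn (fun p : ℝ => p ^ (k - s) * (1 - p) ^ (n - k)) (Icc 0 1) μ :=
    fun k => (by fun_prop : Continuous _).integrableOn_Icc
  simp_rw [← integral_const_mul]
  rw [← integral_finsetSum _ fun k _ => (hint k).const_mul _]
  calc _ ≤ ∫ _ in Icc (0:ℝ) 1, (1:ℝ) ∂μ :=
        setIntegral_mono_on (integrable_finsetSum _ fun k _ => (hint k).const_mul _)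
          (integrableOn_const (measure_ne_top μ _)) measurableSet_Icc
          fun p hp => sum_choose_sub_mul_pow_le_one hS hp
    _ = μ.real (Icc 0 1) := by simp

theorem large_jump_rate_bound_general (Λ : Measure ℝ) [IsFiniteMeasure Λ] :
    ∀ η : ℝ, 0 < η → ∀ b : ℕ, 2 / η ≤ (b : ℝ) →
      ∑ k ∈ (Finset.Icc 2 b).filter (fun k : ℕ => η * (b : ℝ) < (k : ℝ)),
          (b.choose k : ℝ) * lamBK Λ b k
        ≤ 2 * (Λ (Set.Icc (0:ℝ) 1)).toReal / η ^ 2 := by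
  intro η hη b hb
  have hηb : 2 ≤ η * b := by rwa [div_le_iff₀ hη, mul_comm] at hb
  set S := (Finset.Icc 2 b).filter (fun k : ℕ => η * (b : ℝ) < (k : ℝ))
  have hS : S ⊆ Finset.Icc 2 b := Finset.filter_subset _ _
  calc ∑ k ∈ S, (b.choose k : ℝ) * lamBK Λ b k
      ≤ ∑ k ∈ S, 2 / η ^ 2 * ((b - 2).choose (k - 2) *
          ∫ p in Icc (0:ℝ) 1, p ^ (k - 2) * (1 - p) ^ (b - k) ∂Λ) := by
        refine Finset.sum_le_sum fun k hk => ?_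
        obtain ⟨hkIcc, hkη⟩ := Finset.mem_filter.1 hk
        obtain ⟨hk2, hkb⟩ := Finset.mem_Icc.1 hkIcc
        have hintegral_nonneg : 0 ≤ ∫ p in Icc (0:ℝ) 1, p ^ (k - 2) * (1 - p) ^ (b - k) ∂Λ :=
          setIntegral_nonneg measurableSet_Icc fun p hp => by
            have := sub_nonneg.2 hp.2; have := hp.1; positivity
        rw [lamBK_eq_setIntegral_pow Λ hk2 hkb, ← mul_assoc]
        gcongr
        exact choose_le_div_sq_mul_choose_sub_two hη hηb hkη
    _ ≤ 2 / η ^ 2 * Λ.real (Icc 0 1) := by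
        rw [← Finset.mul_sum]
        gcongr
        exact sum_choose_sub_mul_setIntegral_le Λ hS
    _ = 2 * (Λ (Set.Icc (0:ℝ) 1)).toReal / η ^ 2 := by
        rw [Measure.real]; ring

/-- For every `η > 0` and every integer `b ≥ 2/η`,
`Σ_{k : ηb < k ≤ b} C(b,k) λ_{b,k} ≤ 2 Λ([0,1]) / η²`, the sum ranging over
integers `k` with `2 ≤ k ≤ b` and `k > ηb`. -/
theorem large_jump_rate_bound (Λ : Measure ℝ) [IsFiniteMeasure Λ] (hΛ : Λ ≠ 0)
    (hsupp : Λ (Set.Icc (0:ℝ) 1)ᶜ = 0) :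
    ∀ η : ℝ, 0 < η → ∀ b : ℕ, 2 / η ≤ (b : ℝ) →
      ∑ k ∈ (Finset.Icc 2 b).filter (fun k : ℕ => η * (b : ℝ) < (k : ℝ)),
          (b.choose k : ℝ) * lamBK Λ b k
        ≤ 2 * (Λ (Set.Icc (0:ℝ) 1)).toReal / η ^ 2 :=
  large_jump_rate_bound_general Λ
end
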